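/- Let (r_n) ⊂ (0,1) with ∑ r_n < ∞, K the associated Smith–Volterra–Cantor set, c_0 = Leb(K) > 0 and ω = ℝ \ K. There exist c > 0, C > 0 and L_0 > 0 such that for every 0 < L < L_0: c·∑_{k ≥ log₂(3c_0/L)} r_k ≤ inf_{x∈ℝ} Leb(ω ∩ B(x,L))/Leb(B(x,L)) ≤ C·∑_{k ≥ log₂(c_0/(4L))} r_k. -/
import Mathlib


open MeasureTheory Filter
open scoped ENNReal

noncomputable def svcLen (r : ℕ → ℝ) : ℕ → ℝ
  | 0 => 1
  | n + 1 => (1 - r n) / 2 * svcLen r n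

noncomputable def svcLeft (r : ℕ → ℝ) : ℕ → ℕ → ℝ
  | 0, _ => 0
  | n + 1, k =>
      if k % 2 = 0 then svcLeft r n (k / 2)
      else svcLeft r n (k / 2) + svcLen r n - svcLen r (n + 1)

/-- The `n`-th stage of the Smith–Volterra–Cantor construction. -/
noncomputable def svcStage (r : ℕ → ℝ) (n : ℕ) : Set ℝ :=
  ⋃ k ∈ Finset.range (2 ^ n), Set.Icc (svcLeft r n k) (svcLeft r n k + svcLen r n)

/-- The Smith–Volterra–Cantor set associated with `r`. -/
noncomputable def svcSet (r : ℕ → ℝ) : Set ℝ := ⋂ n, svcStage r n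

section lemmas
variable (r : ℕ → ℝ) (hr : ∀ n, r n ∈ Set.Ioo (0 : ℝ) 1)
include hr

lemma len_pos : ∀ n, 0 < svcLen r n := by
  intro n
  induction n with
  | zero => simp [svcLen]
  | succ n ih =>
    have h := (hr n).2
    have : (0:ℝ) < (1 - r n) / 2 := by linarith
    simpa [svcLen] using mul_pos this ih

lemma two_len_succ_lt (n : ℕ) : 2 * svcLen r (n+1) < svcLen r n := by
  have h := (hr n).1
  have hp := len_pos r hr n
  simp only [svcLen]
  nlinarith

lemma len_succ_lt (n : ℕ) : svcLen r (n+1) < svcLen r n := by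
  have := two_len_succ_lt r hr n
  have hp := len_pos r hr (n+1)
  linarith

lemma len_antitone : Antitone (svcLen r) :=
  antitone_nat_of_succ_le fun n => (len_succ_lt r hr n).le

lemma left_spacing : ∀ n k, k + 1 < 2 ^ n →
    svcLeft r n k + svcLen r n < svcLeft r n (k+1) := by
  intro n
  induction n with
  | zero => intro k hk; simp at hk
  | succ n ih =>
    intro k hk
    rcases Nat.even_or_odd k with ⟨t, ht⟩ | ⟨t, ht⟩
    · subst ht
      have h2t : (t+t) % 2 = 0 := by omega
      have h2t1 : (t+t+1) % 2 = 1 := by omega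
      have hd : (t+t)/2 = t := by omega
      have hd1 : (t+t+1)/2 = t := by omega
      have := two_len_succ_lt r hr n
      simp only [svcLeft, h2t, h2t1, hd, hd1, if_true]
      norm_num
      linarith
    · subst ht
      have h2t1 : (2*t+1) % 2 = 1 := by omega
      have h2t2 : (2*t+1+1) % 2 = 0 := by omega
      have hd1 : (2*t+1)/2 = t := by omega
      have hd2 : (2*t+1+1)/2 = t+1 := by omega
      have htlt : t + 1 < 2 ^ n := by
        have : 2*t+1+1 < 2^(n+1) := hk
        omega
      have hih := ih t htlt
      have hp := len_pos r hr (n+1)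
      simp only [svcLeft, h2t1, h2t2, hd1, hd2, if_true]
      norm_num
      linarith

lemma left_chain : ∀ n j k, j < k → k < 2 ^ n →
    svcLeft r n j + svcLen r n < svcLeft r n k := by
  intro n j k hjk hk
  induction k with
  | zero => omega
  | succ k ih =>
    rcases Nat.lt_or_ge j k with h | h
    · have h1 := ih h (by omega)
      have h2 := left_spacing r hr n k hk
      have hp := len_pos r hr n
      linarith
    · have : j = k := by omega
      subst this
      exact left_spacing r hr n j hk

lemma child_sub (n k : ℕ) :
    Set.Icc (svcLeft r (n+1) k) (svcLeft r (n+1) k + svcLen r (n+1)) ⊆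
      Set.Icc (svcLeft r n (k/2)) (svcLeft r n (k/2) + svcLen r n) := by
  have h1 := len_succ_lt r hr n
  have h2 := len_pos r hr (n+1)
  rcases Nat.even_or_odd k with ⟨t, ht⟩ | ⟨t, ht⟩ <;> subst ht
  · have hm : (t+t) % 2 = 0 := by omega
    simp only [svcLeft, hm, if_true]
    apply Set.Icc_subset_Icc le_rfl
    linarith
  · have hm : (2*t+1) % 2 = 1 := by omega
    simp only [svcLeft, hm]
    norm_num
    apply Set.Icc_subset_Icc <;> linarith

lemma stage_antitone : Antitone (svcStage r) := by
  apply antitone_nat_of_succ_le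
  intro n x hx
  simp only [svcStage, Set.mem_iUnion, Finset.mem_range] at hx ⊢
  obtain ⟨k, hk, hxk⟩ := hx
  exact ⟨k/2, by omega, child_sub r hr n k hxk⟩

end lemmas

lemma stage_measurable (r : ℕ → ℝ) (n : ℕ) : MeasurableSet (svcStage r n) := by
  apply Finset.measurableSet_biUnion
  intro k _
  exact measurableSet_Icc

section vol
variable (r : ℕ → ℝ) (hr : ∀ n, r n ∈ Set.Ioo (0 : ℝ) 1)
include hr

lemma stage_pairwise (n : ℕ) :
    ((Finset.range (2^n) : Finset ℕ) : Set ℕ).PairwiseDisjoint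
      (fun k => Set.Icc (svcLeft r n k) (svcLeft r n k + svcLen r n)) := by
  intro j hj k hk hjk
  simp only [Finset.coe_range, Set.mem_Iio] at hj hk
  rcases lt_trichotomy j k with h | h | h
  · have hchain := left_chain r hr n j k h hk
    apply Set.disjoint_left.mpr
    rintro x ⟨_, h1⟩ ⟨h2, _⟩
    linarith
  · exact absurd h hjk
  · have hchain := left_chain r hr n k j h hj
    apply Set.disjoint_right.mpr
    rintro x ⟨_, h1⟩ ⟨h2, _⟩
    linarith

lemma volume_stage (n : ℕ) :
    volume (svcStage r n) = ENNReal.ofReal (2^n * svcLen r n) := by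
  rw [svcStage, measure_biUnion_finset (stage_pairwise r hr n)
    (fun k _ => measurableSet_Icc)]
  have : ∀ k ∈ Finset.range (2^n),
      volume (Set.Icc (svcLeft r n k) (svcLeft r n k + svcLen r n))
        = ENNReal.ofReal (svcLen r n) := by
    intro k _; rw [Real.volume_Icc]; ring_nf
  rw [Finset.sum_congr rfl this, Finset.sum_const, Finset.card_range, nsmul_eq_mul]
  rw [← ENNReal.ofReal_natCast, ← ENNReal.ofReal_mul (by positivity)]
  norm_num

lemma stage_vol_ne_top (n : ℕ) : volume (svcStage r n) ≠ ⊤ := by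
  rw [volume_stage r hr n]; exact ENNReal.ofReal_ne_top

lemma tendsto_vol_stage :
    Tendsto (fun n => ENNReal.ofReal (2^n * svcLen r n)) atTop
      (nhds (volume (svcSet r))) := by
  have : Tendsto (fun n => volume (svcStage r n)) atTop (nhds (volume (svcSet r))) :=
    tendsto_measure_iInter_atTop
      (fun i => (stage_measurable r i).nullMeasurableSet)
      (stage_antitone r hr) ⟨0, stage_vol_ne_top r hr 0⟩
  simpa [volume_stage r hr] using this

end vol

lemma svcSet_subset_stage (r : ℕ → ℝ) (n : ℕ) : svcSet r ⊆ svcStage r n :=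
  Set.iInter_subset _ n

lemma svcSet_measurable (r : ℕ → ℝ) : MeasurableSet (svcSet r) :=
  MeasurableSet.iInter fun n => stage_measurable r n

section c0facts
variable (r : ℕ → ℝ) (hr : ∀ n, r n ∈ Set.Ioo (0 : ℝ) 1)
  (c₀ : ℝ) (hc₀pos : 0 < c₀) (hc₀ : volume (svcSet r) = ENNReal.ofReal c₀)
include hr hc₀

lemma c0_le_P (n : ℕ) : c₀ ≤ 2^n * svcLen r n := by
  have h1 : volume (svcSet r) ≤ volume (svcStage r n) :=
    measure_mono (svcSet_subset_stage r n)
  rw [hc₀, volume_stage r hr n] at h1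
  have hl := (len_pos r hr n).le
  have := (ENNReal.ofReal_le_ofReal_iff (mul_nonneg (by positivity) hl)).mp h1
  linarith

include hc₀pos in
lemma tendsto_P : Tendsto (fun n => 2^n * svcLen r n) atTop (nhds c₀) := by
  have h := tendsto_vol_stage r hr
  rw [hc₀] at h
  have h2 : Tendsto (fun n => (ENNReal.ofReal (2^n * svcLen r n)).toReal) atTop
      (nhds (ENNReal.ofReal c₀).toReal) :=
    (ENNReal.tendsto_toReal ENNReal.ofReal_ne_top).comp h
  have heq : ∀ n, (ENNReal.ofReal (2^n * svcLen r n)).toReal = 2^n * svcLen r n := by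
    intro n
    have := len_pos r hr n
    rw [ENNReal.toReal_ofReal (by positivity)]
  simp only [heq, ENNReal.toReal_ofReal hc₀pos.le] at h2
  exact h2

end c0facts

section structure2
variable (r : ℕ → ℝ) (hr : ∀ n, r n ∈ Set.Ioo (0 : ℝ) 1)
include hr

lemma descend_sub (n : ℕ) : ∀ d j t, t < 2^d →
    Set.Icc (svcLeft r (n+d) (j*2^d+t)) (svcLeft r (n+d) (j*2^d+t) + svcLen r (n+d)) ⊆
      Set.Icc (svcLeft r n j) (svcLeft r n j + svcLen r n) := by
  intro d
  induction d with
  | zero => intro j t ht; interval_cases t; simp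
  | succ d ih =>
    intro j t ht
    have hdiv : (j*2^(d+1)+t)/2 = j*2^d + t/2 := by
      have h2 : 2^(d+1) = 2*2^d := by ring
      have h3 : j*2^(d+1) = 2*(j*2^d) := by ring
      omega
    have hsub := child_sub r hr (n+d) (j*2^(d+1)+t)
    rw [hdiv] at hsub
    have : n + (d+1) = (n + d) + 1 := by omega
    rw [this]
    exact hsub.trans (ih j (t/2) (by omega))

lemma vol_Icc_inter_stage (n j d : ℕ) (hj : j < 2^n) :
    ENNReal.ofReal (2^d * svcLen r (n+d)) ≤
      volume (Set.Icc (svcLeft r n j) (svcLeft r n j + svcLen r n) ∩ svcStage r (n+d)) := by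
  have hsub : (⋃ t ∈ Finset.range (2^d),
      Set.Icc (svcLeft r (n+d) (j*2^d+t)) (svcLeft r (n+d) (j*2^d+t) + svcLen r (n+d))) ⊆
      Set.Icc (svcLeft r n j) (svcLeft r n j + svcLen r n) ∩ svcStage r (n+d) := by
    intro x hx
    simp only [Set.mem_iUnion, Finset.mem_range] at hx
    obtain ⟨t, ht, hxt⟩ := hx
    refine ⟨descend_sub r hr n d j t ht hxt, ?_⟩
    simp only [svcStage, Set.mem_iUnion, Finset.mem_range]
    refine ⟨j*2^d+t, ?_, hxt⟩
    have : j + 1 ≤ 2^n := hj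
    have hj1 : (j+1)*2^d = j*2^d + 2^d := by ring
    calc j*2^d+t < (j+1)*2^d := by omega
    _ ≤ 2^n * 2^d := by exact Nat.mul_le_mul_right _ this
    _ = 2^(n+d) := by rw [pow_add]
  refine le_trans ?_ (measure_mono hsub)
  have hinj : ∀ t₁ ∈ Finset.range (2^d), ∀ t₂ ∈ Finset.range (2^d),
      j*2^d+t₁ = j*2^d+t₂ → t₁ = t₂ := by omega
  rw [measure_biUnion_finset ?pd (fun t _ => measurableSet_Icc)]
  case pd =>
    intro t₁ h₁ t₂ h₂ hne
    simp only [Finset.coe_range, Set.mem_Iio] at h₁ h₂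
    have hlt : j*2^d+t₁ < 2^(n+d) ∧ j*2^d+t₂ < 2^(n+d) := by
      have : j + 1 ≤ 2^n := hj
      have h2 : (j+1)*2^d ≤ 2^n*2^d := Nat.mul_le_mul_right _ this
      rw [← pow_add] at h2
      have hj1 : (j+1)*2^d = j*2^d + 2^d := by ring
      omega
    exact stage_pairwise r hr (n+d) (by simp [hlt.1]) (by simp [hlt.2]) (by omega)
  have : ∀ t ∈ Finset.range (2^d),
      volume (Set.Icc (svcLeft r (n+d) (j*2^d+t)) (svcLeft r (n+d) (j*2^d+t) + svcLen r (n+d)))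
        = ENNReal.ofReal (svcLen r (n+d)) := by
    intro t _; rw [Real.volume_Icc]; ring_nf
  rw [Finset.sum_congr rfl this, Finset.sum_const, Finset.card_range, nsmul_eq_mul,
    ← ENNReal.ofReal_natCast, ← ENNReal.ofReal_mul (by positivity)]
  norm_num

variable (c₀ : ℝ) (hc₀ : volume (svcSet r) = ENNReal.ofReal c₀)
include hc₀

lemma vol_Icc_inter_svcSet (n j : ℕ) (hj : j < 2^n) :
    ENNReal.ofReal (c₀ / 2^n) ≤
      volume (Set.Icc (svcLeft r n j) (svcLeft r n j + svcLen r n) ∩ svcSet r) := by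
  set I := Set.Icc (svcLeft r n j) (svcLeft r n j + svcLen r n) with hI
  have hIK : I ∩ svcSet r = ⋂ k, (I ∩ svcStage r k) := by
    rw [svcSet, Set.inter_iInter]
  have htend : Tendsto (fun k => volume (I ∩ svcStage r k)) atTop
      (nhds (volume (I ∩ svcSet r))) := by
    rw [hIK]
    exact tendsto_measure_iInter_atTop
      (fun k => (measurableSet_Icc.inter (stage_measurable r k)).nullMeasurableSet)
      (fun a b hab => Set.inter_subset_inter_right _ (stage_antitone r hr hab))
      ⟨0, ne_top_of_le_ne_top (stage_vol_ne_top r hr 0)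
        (measure_mono Set.inter_subset_right)⟩
  refine ge_of_tendsto htend (Filter.eventually_atTop.mpr ⟨n, fun k hk => ?_⟩)
  obtain ⟨d, rfl⟩ := Nat.exists_eq_add_of_le hk
  calc ENNReal.ofReal (c₀ / 2^n)
      ≤ ENNReal.ofReal (2^d * svcLen r (n+d)) := by
        apply ENNReal.ofReal_le_ofReal
        have := c0_le_P r hr c₀ hc₀ (n+d)
        rw [div_le_iff₀ (by positivity)]
        rw [pow_add] at this
        nlinarith [len_pos r hr (n+d)]
    _ ≤ volume (I ∩ svcStage r (n+d)) := vol_Icc_inter_stage r hr n j d hj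

end structure2

noncomputable def svcGap (r : ℕ → ℝ) (n j : ℕ) : Set ℝ :=
  Set.Ioo (svcLeft r n j + svcLen r (n+1)) (svcLeft r n j + svcLen r n - svcLen r (n+1))

section gaps
variable (r : ℕ → ℝ) (hr : ∀ n, r n ∈ Set.Ioo (0 : ℝ) 1)
include hr

lemma two_len_succ (n : ℕ) : 2 * svcLen r (n+1) = (1 - r n) * svcLen r n := by
  simp only [svcLen]; ring

lemma volume_gap (n j : ℕ) : volume (svcGap r n j) = ENNReal.ofReal (r n * svcLen r n) := by
  rw [svcGap, Real.volume_Ioo]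
  congr 1
  have := two_len_succ r hr n
  linarith

lemma gap_sub_Ioo (n j : ℕ) :
    svcGap r n j ⊆ Set.Ioo (svcLeft r n j) (svcLeft r n j + svcLen r n) := by
  have h1 := len_pos r hr (n+1)
  apply Set.Ioo_subset_Ioo <;> linarith

lemma gap_disjoint_stage (n j : ℕ) (hj : j < 2^n) :
    svcGap r n j ∩ svcStage r (n+1) = ∅ := by
  apply Set.eq_empty_of_forall_notMem
  rintro x ⟨hg, hs⟩
  simp only [svcStage, Set.mem_iUnion, Finset.mem_range] at hs
  obtain ⟨i, hi, hxi⟩ := hs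
  have hpar := child_sub r hr n i hxi
  have hi2 : i / 2 < 2^n := by
    have : (2:ℕ)^(n+1) = 2*2^n := by ring
    omega
  obtain ⟨hg1, hg2⟩ := hg
  rcases lt_trichotomy (i/2) j with h | h | h
  · have := left_chain r hr n (i/2) j h hj
    have h1 := len_pos r hr (n+1)
    have := hpar.2
    linarith [hpar.2]
  · -- same parent: i = 2j or 2j+1
    rcases Nat.even_or_odd i with ⟨t, ht⟩ | ⟨t, ht⟩
    · have hm : i % 2 = 0 := by omega
      simp only [svcLeft, hm, if_true] at hxi
      rw [h] at hxi
      linarith [hxi.2]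
    · have hm : i % 2 = 1 := by omega
      have ht' : i / 2 = t := by omega
      simp only [svcLeft, hm] at hxi
      norm_num at hxi
      rw [h] at hxi
      linarith [hxi.1]
  · have := left_chain r hr n j (i/2) h hi2
    linarith [hpar.1, (len_pos r hr (n+1)).le]

lemma gap_sub_compl (n j : ℕ) (hj : j < 2^n) : svcGap r n j ⊆ (svcSet r)ᶜ := by
  intro x hx hxK
  have : x ∈ svcGap r n j ∩ svcStage r (n+1) := ⟨hx, svcSet_subset_stage r (n+1) hxK⟩
  rw [gap_disjoint_stage r hr n j hj] at this
  exact this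

lemma gap_disjoint_gap_same (n : ℕ) {j j' : ℕ} (hj : j < 2^n) (hj' : j' < 2^n)
    (hne : j ≠ j') : Disjoint (svcGap r n j) (svcGap r n j') := by
  have h1 := gap_sub_Ioo r hr n j
  have h2 := gap_sub_Ioo r hr n j'
  rcases lt_trichotomy j j' with h | h | h
  · have hch := left_chain r hr n j j' h hj'
    apply Set.disjoint_left.mpr
    intro x hx hx'
    have := (h1 hx).2; have := (h2 hx').1
    linarith
  · exact absurd h hne
  · have hch := left_chain r hr n j' j h hj
    apply Set.disjoint_left.mpr
    intro x hx hx'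
    have := (h1 hx).1; have := (h2 hx').2
    linarith

lemma gap_sub_stage (n j : ℕ) (hj : j < 2^n) : svcGap r n j ⊆ svcStage r n := by
  intro x hx
  simp only [svcStage, Set.mem_iUnion, Finset.mem_range]
  exact ⟨j, hj, Set.Ioo_subset_Icc_self (gap_sub_Ioo r hr n j hx)⟩

lemma gap_disjoint_gap_lt {n n' : ℕ} (j j' : ℕ) (hj : j < 2^n) (hj' : j' < 2^n')
    (h : n < n') : Disjoint (svcGap r n j) (svcGap r n' j') := by
  apply Set.disjoint_left.mpr
  intro x hx hx'
  have h1 : x ∈ svcStage r n' := gap_sub_stage r hr n' j' hj' hx'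
  have h2 : x ∈ svcStage r (n+1) := stage_antitone r hr h h1
  have := gap_disjoint_stage r hr n j hj
  exact absurd (Set.mem_inter hx h2) (by rw [this]; exact id)

end gaps

open scoped Classical in
noncomputable def svcIn (r : ℕ → ℝ) (u v : ℝ) (n : ℕ) : Finset ℕ :=
  (Finset.range (2^n)).filter
    (fun j => Set.Icc (svcLeft r n j) (svcLeft r n j + svcLen r n) ⊆ Set.Ioo u v)

section counting
variable (r : ℕ → ℝ) (hr : ∀ n, r n ∈ Set.Ioo (0 : ℝ) 1)
include hr

open scoped Classical in
lemma count_stage (n : ℕ) (u v : ℝ) :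
    volume (Set.Ioo u v ∩ svcStage r n) ≤
      ((svcIn r u v n).card + 2) * ENNReal.ofReal (svcLen r n) := by
  set F : Finset ℕ := (Finset.range (2^n)).filter
    (fun j => (Set.Icc (svcLeft r n j) (svcLeft r n j + svcLen r n) ∩ Set.Ioo u v).Nonempty)
    with hF
  have hsub : Set.Ioo u v ∩ svcStage r n ⊆
      ⋃ j ∈ F, Set.Icc (svcLeft r n j) (svcLeft r n j + svcLen r n) := by
    rintro x ⟨hxu, hxs⟩
    simp only [svcStage, Set.mem_iUnion, Finset.mem_range] at hxs
    obtain ⟨j, hj, hxj⟩ := hxs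
    simp only [Set.mem_iUnion, hF, Finset.mem_filter, Finset.mem_range]
    exact ⟨j, ⟨hj, ⟨x, hxj, hxu⟩⟩, hxj⟩
  calc volume (Set.Ioo u v ∩ svcStage r n)
      ≤ volume (⋃ j ∈ F, Set.Icc (svcLeft r n j) (svcLeft r n j + svcLen r n)) :=
        measure_mono hsub
    _ ≤ ∑ j ∈ F, volume (Set.Icc (svcLeft r n j) (svcLeft r n j + svcLen r n)) :=
        measure_biUnion_finset_le F _
    _ = F.card * ENNReal.ofReal (svcLen r n) := by
        have hvol : ∀ j ∈ F, volume (Set.Icc (svcLeft r n j) (svcLeft r n j + svcLen r n))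
            = ENNReal.ofReal (svcLen r n) := by
          intro j _; rw [Real.volume_Icc]; congr 1; ring
        rw [Finset.sum_congr rfl hvol, Finset.sum_const, nsmul_eq_mul]
    _ ≤ ((svcIn r u v n).card + 2) * ENNReal.ofReal (svcLen r n) := by
        apply mul_le_mul_left
        have hcard : F.card ≤ (svcIn r u v n).card + 2 := by
          have hFsub : F ⊆ (svcIn r u v n) ∪
              (Finset.range (2^n)).filter
                (fun j => svcLeft r n j ≤ u ∧ u < svcLeft r n j + svcLen r n) ∪
              (Finset.range (2^n)).filter
                (fun j => svcLeft r n j < v ∧ v ≤ svcLeft r n j + svcLen r n) := by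
            intro j hj
            simp only [hF, Finset.mem_filter, Finset.mem_range] at hj
            obtain ⟨hjlt, y, ⟨hy1, hy2⟩, hy3, hy4⟩ := hj
            simp only [Finset.mem_union, svcIn, Finset.mem_filter, Finset.mem_range]
            by_cases hc : Set.Icc (svcLeft r n j) (svcLeft r n j + svcLen r n) ⊆ Set.Ioo u v
            · exact Or.inl (Or.inl ⟨hjlt, hc⟩)
            · rcases not_and_or.mp (fun hand : u < svcLeft r n j ∧ svcLeft r n j + svcLen r n < v
                  => hc (Set.Icc_subset_Ioo hand.1 hand.2)) with hcu | hcv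
              · exact Or.inl (Or.inr ⟨hjlt, le_of_not_gt hcu, by linarith⟩)
              · exact Or.inr ⟨hjlt, by linarith, le_of_not_gt hcv⟩
          have hone : ∀ (w : ℝ), ((Finset.range (2^n)).filter
              (fun j => svcLeft r n j ≤ w ∧ w < svcLeft r n j + svcLen r n)).card ≤ 1 := by
            intro w
            apply Finset.card_le_one.mpr
            intro a ha b hb
            simp only [Finset.mem_filter, Finset.mem_range] at ha hb
            by_contra hne
            rcases lt_trichotomy a b with h | h | h
            · have := left_chain r hr n a b h hb.1; linarith [ha.2.2, hb.2.1]
            · exact hne h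
            · have := left_chain r hr n b a h ha.1; linarith [hb.2.2, ha.2.1]
          have hone' : ((Finset.range (2^n)).filter
              (fun j => svcLeft r n j < v ∧ v ≤ svcLeft r n j + svcLen r n)).card ≤ 1 := by
            apply Finset.card_le_one.mpr
            intro a ha b hb
            simp only [Finset.mem_filter, Finset.mem_range] at ha hb
            by_contra hne
            rcases lt_trichotomy a b with h | h | h
            · have := left_chain r hr n a b h hb.1; linarith [ha.2.2, hb.2.1]
            · exact hne h
            · have := left_chain r hr n b a h ha.1; linarith [hb.2.2, ha.2.1]
          calc F.card ≤ _ := Finset.card_le_card hFsub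
            _ ≤ _ := Finset.card_union_le _ _
            _ ≤ (svcIn r u v n).card + 1 + 1 := by
              have := Finset.card_union_le (svcIn r u v n)
                ((Finset.range (2^n)).filter
                  (fun j => svcLeft r n j ≤ u ∧ u < svcLeft r n j + svcLen r n))
              have h1 := hone u
              omega
            _ = (svcIn r u v n).card + 2 := by omega
        calc (F.card : ℝ≥0∞) ≤ ((svcIn r u v n).card + 2 : ℕ) := by
              exact_mod_cast Nat.cast_le.mpr hcard
          _ = ((svcIn r u v n).card : ℝ≥0∞) + 2 := by push_cast; ring

lemma svcIn_sub (u v : ℝ) (n : ℕ) (j : ℕ) (hj : j ∈ svcIn r u v n) :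
    j < 2^n ∧ Set.Icc (svcLeft r n j) (svcLeft r n j + svcLen r n) ⊆ Set.Ioo u v := by
  classical
  simpa [svcIn] using hj

lemma vol_gaps_ge (m M : ℕ) (u v : ℝ) :
    ∑ i ∈ Finset.range M, ((svcIn r u v (m+i)).card : ℝ≥0∞) *
        ENNReal.ofReal (r (m+i) * svcLen r (m+i)) ≤
      volume (Set.Ioo u v ∩ (svcSet r)ᶜ) := by
  classical
  set U : ℕ → Set ℝ := fun i => ⋃ j ∈ svcIn r u v (m+i), svcGap r (m+i) j with hU
  have hUsub : ∀ i, U i ⊆ Set.Ioo u v ∩ (svcSet r)ᶜ := by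
    intro i x hx
    simp only [hU, Set.mem_iUnion] at hx
    obtain ⟨j, hj, hxj⟩ := hx
    obtain ⟨hjlt, hjsub⟩ := svcIn_sub r hr u v (m+i) j hj
    exact ⟨hjsub (Set.Ioo_subset_Icc_self (gap_sub_Ioo r hr (m+i) j hxj)),
      gap_sub_compl r hr (m+i) j hjlt hxj⟩
  have hUm : ∀ i, MeasurableSet (U i) :=
    fun i => Finset.measurableSet_biUnion _ (fun j _ => measurableSet_Ioo)
  have hUd : ((Finset.range M : Finset ℕ) : Set ℕ).PairwiseDisjoint U := by
    intro i _ i' _ hne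
    apply Set.disjoint_left.mpr
    intro x hx hx'
    simp only [hU, Set.mem_iUnion] at hx hx'
    obtain ⟨j, hj, hxj⟩ := hx
    obtain ⟨j', hj', hxj'⟩ := hx'
    have hjlt := (svcIn_sub r hr u v (m+i) j hj).1
    have hjlt' := (svcIn_sub r hr u v (m+i') j' hj').1
    rcases lt_trichotomy (m+i) (m+i') with h | h | h
    · exact Set.disjoint_left.mp (gap_disjoint_gap_lt r hr j j' hjlt hjlt' h) hxj hxj'
    · have hii : i = i' := by omega
      exact absurd hii hne
    · exact Set.disjoint_left.mp (gap_disjoint_gap_lt r hr j' j hjlt' hjlt h) hxj' hxj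
  calc ∑ i ∈ Finset.range M, ((svcIn r u v (m+i)).card : ℝ≥0∞) *
        ENNReal.ofReal (r (m+i) * svcLen r (m+i))
      = ∑ i ∈ Finset.range M, volume (U i) := by
        apply Finset.sum_congr rfl
        intro i _
        have hU_eq : U i = ⋃ j ∈ svcIn r u v (m+i), svcGap r (m+i) j := rfl
        have hgm : ∀ j ∈ svcIn r u v (m+i), MeasurableSet (svcGap r (m+i) j) :=
          fun j _ => measurableSet_Ioo
        rw [hU_eq, measure_biUnion_finset ?pd hgm]
        case pd =>
          intro j hj j' hj' hne
          exact gap_disjoint_gap_same r hr (m+i)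
            (svcIn_sub r hr u v (m+i) j (by simpa using hj)).1
            (svcIn_sub r hr u v (m+i) j' (by simpa using hj')).1 hne
        have hvol : ∀ j ∈ svcIn r u v (m+i), volume (svcGap r (m+i) j)
            = ENNReal.ofReal (r (m+i) * svcLen r (m+i)) :=
          fun j _ => volume_gap r hr (m+i) j
        rw [Finset.sum_congr rfl hvol, Finset.sum_const, nsmul_eq_mul]
    _ = volume (⋃ i ∈ Finset.range M, U i) :=
        (measure_biUnion_finset hUd (fun i _ => hUm i)).symm
    _ ≤ volume (Set.Ioo u v ∩ (svcSet r)ᶜ) := by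
        apply measure_mono
        intro x hx
        simp only [Set.mem_iUnion] at hx
        obtain ⟨i, _, hxi⟩ := hx
        exact hUsub i hxi

end counting

section tsums
variable (r : ℕ → ℝ) (hsum : Summable r) (hrnn : ∀ n, 0 ≤ r n)
include hsum hrnn

lemma tail_tsum (m : ℕ) :
    ∑' k : {k : ℕ // m ≤ k}, r ↑k = ∑' i, r (i + m) := by
  have h1 : ∑' k : {k : ℕ // m ≤ k}, r ↑k
      = ∑' k, Set.indicator {k : ℕ | m ≤ k} r k := tsum_subtype _ _
  rw [h1, ← Summable.sum_add_tsum_nat_add m (hsum.indicator _)]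
  have h0 : ∑ i ∈ Finset.range m, Set.indicator {k : ℕ | m ≤ k} r i = 0 :=
    Finset.sum_eq_zero (fun i hi => Set.indicator_of_notMem
      (by simp only [Finset.mem_range] at hi; simpa using (by omega : ¬ m ≤ i)) r)
  rw [h0, zero_add]
  exact tsum_congr fun i => Set.indicator_of_mem (by simp) r

lemma threshold_tsum (N : ℝ) :
    ∑' k : {k : ℕ // N ≤ (k:ℝ)}, r ↑k = ∑' i, r (i + ⌈N⌉₊) := by
  have hset : {k : ℕ | N ≤ (k:ℝ)} = {k : ℕ | ⌈N⌉₊ ≤ k} := by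
    ext k; simp [Nat.ceil_le]
  have h1 : ∑' k : {k : ℕ // N ≤ (k:ℝ)}, r ↑k
      = ∑' k, Set.indicator {k : ℕ | N ≤ (k:ℝ)} r k := tsum_subtype _ _
  rw [h1, hset, ← tsum_subtype]
  exact tail_tsum r hsum hrnn ⌈N⌉₊

lemma tail_nonneg (m : ℕ) : 0 ≤ ∑' i, r (i + m) :=
  tsum_nonneg (fun i => hrnn (i + m))

lemma tail_le_total (m : ℕ) : ∑' i, r (i + m) ≤ ∑' k, r k := by
  have h := Summable.sum_add_tsum_nat_add m hsum
  have h0 : 0 ≤ ∑ i ∈ Finset.range m, r i := Finset.sum_nonneg (fun i _ => hrnn i)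
  linarith

end tsums

section Pfacts
variable (r : ℕ → ℝ) (hr : ∀ n, r n ∈ Set.Ioo (0 : ℝ) 1)
include hr

lemma P_le_one : ∀ n, 2^n * svcLen r n ≤ 1 := by
  intro n
  induction n with
  | zero => simp [svcLen]
  | succ n ih =>
    have h2 := two_len_succ r hr n
    have hp := len_pos r hr n
    have h1 := (hr n).1
    have : (2:ℝ)^(n+1) * svcLen r (n+1) = 2^n * (2 * svcLen r (n+1)) := by ring
    rw [this, h2]
    have hpow : (0:ℝ) < 2^n := by positivity
    nlinarith [mul_nonneg (mul_nonneg h1.le hpow.le) hp.le]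

variable (hsum : Summable r) (c₀ : ℝ) (hc₀pos : 0 < c₀)
  (hc₀ : volume (svcSet r) = ENNReal.ofReal c₀)
include hsum hc₀ hc₀pos

lemma P_sub_tail_le (n : ℕ) : 2^n * svcLen r n - (∑' i, r (i + n)) ≤ c₀ := by
  have key : ∀ k, 2^n * svcLen r n - (∑ i ∈ Finset.range k, r (i + n))
      ≤ 2^(k+n) * svcLen r (k+n) := by
    intro k
    induction k with
    | zero => simp
    | succ k ih =>
      rw [Finset.sum_range_succ]
      have h2 := two_len_succ r hr (k+n)
      have hP1 := P_le_one r hr (k+n)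
      have hppos : (0:ℝ) < 2^(k+n) := by positivity
      have hrk := (hr (k+n)).2
      have hrk0 := (hr (k+n)).1
      have hlp := len_pos r hr (k+n)
      have heq : (2:ℝ)^((k+1)+n) * svcLen r ((k+1)+n)
          = 2^(k+n) * (2 * svcLen r ((k+n)+1)) := by
        rw [show (k+1)+n = (k+n)+1 from by omega]; ring
      rw [heq, h2]
      nlinarith
  have htail : Tendsto (fun k => 2^n * svcLen r n - (∑ i ∈ Finset.range k, r (i + n)))
      atTop (nhds (2^n * svcLen r n - (∑' i, r (i + n)))) :=
    (tendsto_const_nhds.sub (((summable_nat_add_iff n).2 hsum).hasSum.tendsto_sum_nat))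
  have hP : Tendsto (fun k => 2^(k+n) * svcLen r (k+n)) atTop (nhds c₀) :=
    (tendsto_P r hr c₀ hc₀pos hc₀).comp (tendsto_add_atTop_nat n)
  exact le_of_tendsto_of_tendsto' htail hP key

end Pfacts


set_option maxHeartbeats 1000000 in
/-- Two-sided thickness bounds for the complement of a Smith–Volterra–Cantor set: with
`c₀ = Leb K > 0` and `ω = ℝ \ K`, there exist `c, C, L₀ > 0` such that for `0 < L < L₀`,
`c · ∑_{k ≥ log₂(3c₀/L)} r k ≤ inf_x Leb(ω ∩ B(x,L))/Leb(B(x,L))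
   ≤ C · ∑_{k ≥ log₂(c₀/(4L))} r k`. -/
theorem svc_complement_thickness_bounds (r : ℕ → ℝ) (hr : ∀ n, r n ∈ Set.Ioo (0 : ℝ) 1)
    (hsum : Summable r) (c₀ : ℝ) (hc₀pos : 0 < c₀)
    (hc₀ : volume (svcSet r) = ENNReal.ofReal c₀) :
    ∃ c > (0 : ℝ), ∃ C > (0 : ℝ), ∃ L₀ > (0 : ℝ), ∀ L : ℝ, 0 < L → L < L₀ →
      ENNReal.ofReal
          (c * ∑' k : {k : ℕ // Real.logb 2 (3 * c₀ / L) ≤ (k : ℝ)}, r k)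
        ≤ (⨅ x : ℝ, volume ((svcSet r)ᶜ ∩ Set.Ioo (x - L) (x + L)) /
            volume (Set.Ioo (x - L) (x + L))) ∧
      (⨅ x : ℝ, volume ((svcSet r)ᶜ ∩ Set.Ioo (x - L) (x + L)) /
            volume (Set.Ioo (x - L) (x + L)))
        ≤ ENNReal.ofReal
            (C * ∑' k : {k : ℕ // Real.logb 2 (c₀ / (4 * L)) ≤ (k : ℝ)}, r k) := by
  classical
  have hrnn : ∀ n, 0 ≤ r n := fun n => (hr n).1.le
  set S := ∑' k, r k with hS
  have hSnn : 0 ≤ S := tsum_nonneg hrnn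
  have htendP := tendsto_P r hr c₀ hc₀pos hc₀
  have hev : ∀ᶠ n in atTop, 2^n * svcLen r n < 9/8 * c₀ :=
    htendP.eventually_lt_const (by linarith)
  obtain ⟨n₂, hn₂⟩ := eventually_atTop.mp hev
  have hcpos : (0:ℝ) < min (1/8) (1/(2*(S+1))) := by
    apply lt_min (by norm_num)
    positivity
  refine ⟨min (1/8) (1/(2*(S+1))), hcpos, 2/c₀, by positivity,
    min (c₀/4) (3*c₀/2^n₂), by positivity, ?_⟩
  intro L hL hLlt
  set c := min (1/8) (1/(2*(S+1))) with hc
  have hc8 : c ≤ 1/8 := min_le_left _ _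
  have hcS : c ≤ 1/(2*(S+1)) := min_le_right _ _
  have hL4 : L < c₀/4 := lt_of_lt_of_le hLlt (min_le_left _ _)
  have hLn₂ : L < 3*c₀/2^n₂ := lt_of_lt_of_le hLlt (min_le_right _ _)
  constructor
  · -- LOWER BOUND
    set N := Real.logb 2 (3*c₀/L) with hNdef
    set m := ⌈N⌉₊ with hm
    have h3cL : 0 < 3*c₀/L := by positivity
    have h2N : (2:ℝ) ^ N = 3*c₀/L := Real.rpow_logb (by norm_num) (by norm_num) h3cL
    have hn₂N : (n₂:ℝ) ≤ N := by
      apply (Real.le_logb_iff_rpow_le (by norm_num) h3cL).mpr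
      rw [Real.rpow_natCast]
      rw [le_div_iff₀ hL]
      have hp : (0:ℝ) < 2^n₂ := by positivity
      have := (lt_div_iff₀ hp).mp hLn₂
      linarith
    have hNm : N ≤ (m:ℝ) := Nat.le_ceil N
    have hn₂m : n₂ ≤ m := by exact_mod_cast hn₂N.trans hNm
    have hPm : 2^m * svcLen r m < 9/8*c₀ := hn₂ m hn₂m
    have h2m : 3*c₀/L ≤ (2:ℝ)^m := by
      rw [← h2N, ← Real.rpow_natCast 2 m]
      exact Real.rpow_le_rpow_of_exponent_le (by norm_num) hNm
    have hp2m : (0:ℝ) < 2^m := by positivity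
    have hlm : svcLen r m ≤ 3*L/8 := by
      have hlp := len_pos r hr m
      have h2mL : 3*c₀ ≤ 2^m * L := by
        have := (div_le_iff₀ hL).mp h2m
        linarith
      nlinarith
    -- the tail sum
    set T := ∑' i, r (i + m) with hT
    have hTnn : 0 ≤ T := tail_nonneg r hsum hrnn m
    have hTS : T ≤ S := tail_le_total r hsum hrnn m
    have hSig : (∑' k : {k : ℕ // N ≤ (k:ℝ)}, r ↑k) = T :=
      threshold_tsum r hsum hrnn N
    -- per-x bound
    have hlow : ∀ x : ℝ, ENNReal.ofReal (c * T * (2*L))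
        ≤ volume ((svcSet r)ᶜ ∩ Set.Ioo (x - L) (x + L)) := by
      intro x
      set u := x - L with hu
      set v := x + L with hv
      rcases le_or_gt (volume ((svcSet r)ᶜ ∩ Set.Ioo u v)) (ENNReal.ofReal L)
        with hcase | hcase
      · -- small complement case: use gap counting
        have hcard : ∀ i : ℕ, L/4 ≤ ((svcIn r u v (m+i)).card : ℝ) * svcLen r (m+i) := by
          intro i
          have hlk := len_pos r hr (m+i)
          have hlle : svcLen r (m+i) ≤ 3*L/8 :=
            le_trans (len_antitone r hr (Nat.le_add_right m i)) hlm
          have hcount := count_stage r hr (m+i) u v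
          have hsplit := measure_le_inter_add_diff volume (Set.Ioo u v) (svcStage r (m+i))
          have hdiffsub : Set.Ioo u v \ svcStage r (m+i) ⊆ (svcSet r)ᶜ ∩ Set.Ioo u v := by
            rintro y ⟨hy1, hy2⟩
            exact ⟨fun hyK => hy2 (svcSet_subset_stage r (m+i) hyK), hy1⟩
          have hdle : volume (Set.Ioo u v \ svcStage r (m+i)) ≤ ENNReal.ofReal L :=
            le_trans (measure_mono hdiffsub) hcase
          have hvol : volume (Set.Ioo u v) = ENNReal.ofReal (2*L) := by
            rw [Real.volume_Ioo]; congr 1; rw [hu, hv]; ring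
          set q : ℕ := (svcIn r u v (m+i)).card with hq
          have hchain : ENNReal.ofReal (2*L) ≤
              ENNReal.ofReal ((q + 2) * svcLen r (m+i) + L) := by
            calc ENNReal.ofReal (2*L) = volume (Set.Ioo u v) := hvol.symm
              _ ≤ volume (Set.Ioo u v ∩ svcStage r (m+i))
                  + volume (Set.Ioo u v \ svcStage r (m+i)) := hsplit
              _ ≤ ((q:ℝ≥0∞) + 2) * ENNReal.ofReal (svcLen r (m+i))
                  + ENNReal.ofReal L := add_le_add hcount hdle
              _ = ENNReal.ofReal ((q + 2) * svcLen r (m+i) + L) := by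
                  rw [ENNReal.ofReal_add (by positivity) hL.le,
                    ENNReal.ofReal_mul (by positivity)]
                  congr 2
                  rw [ENNReal.ofReal_add (by positivity) (by norm_num)]
                  simp [ENNReal.ofReal_natCast]
          have hreal : 2*L ≤ (q + 2) * svcLen r (m+i) + L := by
            have hrhs : (0:ℝ) ≤ (q + 2) * svcLen r (m+i) + L := by positivity
            exact (ENNReal.ofReal_le_ofReal_iff hrhs).mp hchain
          nlinarith
        have hpartial : ∀ M : ℕ, ENNReal.ofReal ((L/4) * ∑ i ∈ Finset.range M, r (m+i))
            ≤ volume ((svcSet r)ᶜ ∩ Set.Ioo u v) := by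
          intro M
          have h1 : ENNReal.ofReal ((L/4) * ∑ i ∈ Finset.range M, r (m+i))
              = ∑ i ∈ Finset.range M, ENNReal.ofReal ((L/4) * r (m+i)) := by
            rw [Finset.mul_sum, ENNReal.ofReal_sum_of_nonneg]
            intro i _
            have := hrnn (m+i)
            positivity
          rw [h1]
          have h2 : ∀ i ∈ Finset.range M, ENNReal.ofReal ((L/4) * r (m+i))
              ≤ ((svcIn r u v (m+i)).card : ℝ≥0∞) *
                ENNReal.ofReal (r (m+i) * svcLen r (m+i)) := by
            intro i _
            have hci := hcard i
            have hri := hrnn (m+i)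
            have hlk := (len_pos r hr (m+i)).le
            calc ENNReal.ofReal ((L/4) * r (m+i))
                ≤ ENNReal.ofReal (((svcIn r u v (m+i)).card : ℝ) *
                    (r (m+i) * svcLen r (m+i))) := by
                  apply ENNReal.ofReal_le_ofReal
                  nlinarith
              _ = ((svcIn r u v (m+i)).card : ℝ≥0∞) *
                  ENNReal.ofReal (r (m+i) * svcLen r (m+i)) := by
                  rw [ENNReal.ofReal_mul (by positivity), ENNReal.ofReal_natCast]
          calc ∑ i ∈ Finset.range M, ENNReal.ofReal ((L/4) * r (m+i))
              ≤ ∑ i ∈ Finset.range M, ((svcIn r u v (m+i)).card : ℝ≥0∞) *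
                  ENNReal.ofReal (r (m+i) * svcLen r (m+i)) := Finset.sum_le_sum h2
            _ ≤ volume (Set.Ioo u v ∩ (svcSet r)ᶜ) := vol_gaps_ge r hr m M u v
            _ = volume ((svcSet r)ᶜ ∩ Set.Ioo u v) := by rw [Set.inter_comm]
        have hsummable : Summable (fun i => r (m+i)) := by
          have := (summable_nat_add_iff (f := r) m).mpr hsum
          exact this.congr (fun i => by rw [add_comm])
        have hTeq : ∑' i, r (m+i) = T := tsum_congr (fun i => by rw [add_comm])
        have hlim : Tendsto (fun M => ENNReal.ofReal ((L/4) * ∑ i ∈ Finset.range M, r (m+i)))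
            atTop (nhds (ENNReal.ofReal ((L/4) * T))) := by
          apply (ENNReal.continuous_ofReal.tendsto _).comp
          rw [← hTeq]
          exact tendsto_const_nhds.mul hsummable.hasSum.tendsto_sum_nat
        have hge : ENNReal.ofReal ((L/4) * T) ≤ volume ((svcSet r)ᶜ ∩ Set.Ioo u v) :=
          le_of_tendsto hlim (Filter.Eventually.of_forall hpartial)
        refine le_trans ?_ hge
        apply ENNReal.ofReal_le_ofReal
        nlinarith [mul_nonneg (mul_nonneg (by linarith : (0:ℝ) ≤ 1/8 - c) hTnn)
          (by linarith : (0:ℝ) ≤ 2*L)]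
      · -- big complement case
        refine le_trans ?_ hcase.le
        apply ENNReal.ofReal_le_ofReal
        have h1 : c * T ≤ 1/2 := by
          calc c * T ≤ (1/(2*(S+1))) * T := by
                apply mul_le_mul_of_nonneg_right hcS hTnn
            _ ≤ (1/(2*(S+1))) * S := by
                apply mul_le_mul_of_nonneg_left hTS (by positivity)
            _ ≤ 1/2 := by
                rw [div_mul_eq_mul_div, div_le_div_iff₀ (by positivity) (by norm_num)]
                nlinarith
        nlinarith
    apply le_iInf
    intro x
    have hvolB : volume (Set.Ioo (x-L) (x+L)) = ENNReal.ofReal (2*L) := by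
      rw [Real.volume_Ioo]; congr 1; ring
    rw [hvolB, ENNReal.le_div_iff_mul_le
      (Or.inl (ENNReal.ofReal_pos.mpr (by linarith)).ne') (Or.inl ENNReal.ofReal_ne_top)]
    calc ENNReal.ofReal (c * (∑' k : {k : ℕ // N ≤ (k:ℝ)}, r ↑k)) * ENNReal.ofReal (2*L)
        = ENNReal.ofReal (c * T * (2*L)) := by
          rw [hSig, ← ENNReal.ofReal_mul (by positivity)]
      _ ≤ volume ((svcSet r)ᶜ ∩ Set.Ioo (x - L) (x + L)) := hlow x
  · -- UPPER BOUND
    set Mr := Real.logb 2 (c₀/(4*L)) with hMr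
    set n := ⌈Mr⌉₊ with hn
    have hq : 0 < c₀/(4*L) := by positivity
    have h1q : 1 < c₀/(4*L) := by
      rw [lt_div_iff₀ (by positivity)]
      linarith
    have hMr0 : 0 < Mr := Real.logb_pos (by norm_num) h1q
    have h2Mr : (2:ℝ) ^ Mr = c₀/(4*L) := Real.rpow_logb (by norm_num) (by norm_num) hq
    have hMn : Mr ≤ (n:ℝ) := Nat.le_ceil Mr
    have hn1 : (n:ℝ) ≤ Mr + 1 := (Nat.ceil_lt_add_one hMr0.le).le
    have h2n_le : (2:ℝ)^n ≤ c₀/(2*L) := by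
      have h := Real.rpow_le_rpow_of_exponent_le (by norm_num : (1:ℝ) ≤ 2) hn1
      rw [Real.rpow_natCast] at h
      calc (2:ℝ)^n ≤ (2:ℝ)^(Mr+1) := h
        _ = c₀/(4*L) * 2 := by
            rw [Real.rpow_add (by norm_num), h2Mr, Real.rpow_one]
        _ = c₀/(2*L) := by field_simp; ring
    have h2n_ge : c₀/(4*L) ≤ (2:ℝ)^n := by
      rw [← h2Mr, ← Real.rpow_natCast 2 n]
      exact Real.rpow_le_rpow_of_exponent_le (by norm_num) hMn
    have hp2n : (0:ℝ) < 2^n := by positivity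
    have hln := len_pos r hr n
    have hc0P := c0_le_P r hr c₀ hc₀ n
    have hl2L : 2*L ≤ svcLen r n := by
      have h2L : (0:ℝ) < 2*L := by linarith
      have h1 : (2:ℝ)^n * (2*L) ≤ c₀ := by
        calc (2:ℝ)^n * (2*L) ≤ (c₀/(2*L)) * (2*L) := by nlinarith
          _ = c₀ := by field_simp
      nlinarith
    set a := svcLeft r n 0 with ha
    set x₀ := a + svcLen r n / 2 with hx₀
    have hBsub : Set.Ioo (x₀-L) (x₀+L) ⊆ Set.Icc a (a + svcLen r n) := by
      rintro y ⟨hy1, hy2⟩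
      rw [hx₀] at hy1 hy2
      exact ⟨by linarith, by linarith⟩
    have hIK := vol_Icc_inter_svcSet r hr c₀ hc₀ n 0 (by positivity)
    rw [← ha] at hIK
    set T := ∑' i, r (i + n) with hT
    have hTnn : 0 ≤ T := tail_nonneg r hsum hrnn n
    have hSig : (∑' k : {k : ℕ // Mr ≤ (k:ℝ)}, r ↑k) = T := threshold_tsum r hsum hrnn Mr
    have hPT := P_sub_tail_le r hr hsum c₀ hc₀pos hc₀ n
    set I := Set.Icc a (a + svcLen r n) with hI
    have hvolI : volume I = ENNReal.ofReal (svcLen r n) := by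
      rw [hI, Real.volume_Icc]; congr 1; ring
    have hIKsub : I ∩ svcSet r ⊆ I := Set.inter_subset_left
    have hIKmeas : NullMeasurableSet (I ∩ svcSet r) volume :=
      ((measurableSet_Icc.inter (svcSet_measurable r))).nullMeasurableSet
    have hIKfin : volume (I ∩ svcSet r) ≠ ⊤ :=
      ne_top_of_le_ne_top (by rw [hvolI]; exact ENNReal.ofReal_ne_top) (measure_mono hIKsub)
    have hdiff : volume (I \ (I ∩ svcSet r)) = volume I - volume (I ∩ svcSet r) :=
      measure_diff hIKsub hIKmeas hIKfin
    have hcompl_sub : (svcSet r)ᶜ ∩ Set.Ioo (x₀-L) (x₀+L) ⊆ I \ (I ∩ svcSet r) := by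
      rintro y ⟨hyc, hyB⟩
      exact ⟨hBsub hyB, fun hmem => hyc hmem.2⟩
    have hupper1 : volume ((svcSet r)ᶜ ∩ Set.Ioo (x₀-L) (x₀+L))
        ≤ ENNReal.ofReal (svcLen r n - c₀/2^n) := by
      calc volume ((svcSet r)ᶜ ∩ Set.Ioo (x₀-L) (x₀+L))
          ≤ volume (I \ (I ∩ svcSet r)) := measure_mono hcompl_sub
        _ = volume I - volume (I ∩ svcSet r) := hdiff
        _ ≤ ENNReal.ofReal (svcLen r n) - ENNReal.ofReal (c₀/2^n) := by
            rw [hvolI]; exact tsub_le_tsub_left hIK _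
        _ = ENNReal.ofReal (svcLen r n - c₀/2^n) :=
            (ENNReal.ofReal_sub _ (by positivity)).symm
    have h4L : c₀ ≤ 2^n * (4*L) := by
      have := (div_le_iff₀ (by positivity : (0:ℝ) < 4*L)).mp h2n_ge
      linarith
    have hkey : svcLen r n - c₀/2^n ≤ (2/c₀*T)*(2*L) := by
      have e1 : svcLen r n - c₀/2^n = (2^n*svcLen r n - c₀)/2^n := by
        field_simp
      rw [← hT] at hPT
      have hstep1 : (2^n*svcLen r n - c₀)/2^n ≤ T/2^n := by gcongr; linarith
      have hstep2 : T/2^n ≤ (2/c₀*T)*(2*L) := by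
        rw [div_le_iff₀ hp2n]
        have h1 := mul_le_mul_of_nonneg_left h4L hTnn
        have e2 : (2/c₀*T)*(2*L)*2^n = (T*(2^n*(4*L)))/c₀ := by field_simp; ring
        rw [e2, le_div_iff₀ hc₀pos]
        linarith
      rw [e1]
      exact le_trans hstep1 hstep2
    refine le_trans (iInf_le _ x₀) ?_
    have hvolB : volume (Set.Ioo (x₀-L) (x₀+L)) = ENNReal.ofReal (2*L) := by
      rw [Real.volume_Ioo]; congr 1; ring
    rw [hvolB]
    apply ENNReal.div_le_of_le_mul
    rw [hSig]
    calc volume ((svcSet r)ᶜ ∩ Set.Ioo (x₀-L) (x₀+L))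
        ≤ ENNReal.ofReal (svcLen r n - c₀/2^n) := hupper1
      _ ≤ ENNReal.ofReal ((2/c₀*T)*(2*L)) := ENNReal.ofReal_le_ofReal hkey
      _ = ENNReal.ofReal (2/c₀*T) * ENNReal.ofReal (2*L) := by
          apply ENNReal.ofReal_mul
          have : (0:ℝ) ≤ 2/c₀ := by positivity
          exact mul_nonneg this hTnn
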